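/- arXiv:2502.00919 — 7 statements merged into one kernel-verified Lean document; each statement's English description precedes it below -/
import Mathlib

section
/- For every index j with t < j ≤ T, the difference between the attention weights of tokens j and T on the separator vanishes faster than s⁻¹: with A_s(j,t) = 1 / (1 + Σ_{k=1, k≠t}^{j} exp(x_j·x_k + 1 − s)) and A_s(T,t) = 1 / (1 + Σ_{k=1, k≠t}^{T} exp(x_T·x_k + 1 − s)), one has s·(A_s(j,t) − A_s(T,t)) → 0 as s → ∞. -/
open Real Filter Finset Topology

/-- Attention scores: `c_s(i,j) = x_i * x_j + 1` if `i ≠ t` and `j ≠ t`,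
`c_s(i,j) = s` if exactly one of `i, j` equals `t`, and `c_s(t,t) = s ^ 2`. -/
noncomputable def score (t : ℕ) (x : ℕ → ℝ) (s : ℝ) (i j : ℕ) : ℝ :=
  if i = t ∧ j = t then s ^ 2
  else if i = t ∨ j = t then s
  else x i * x j + 1

/-- First-layer causal attention weights
`A_s(i,j) = exp (c_s(i,j)) / ∑_{k=1}^{i} exp (c_s(i,k))`. -/
noncomputable def attn (t : ℕ) (x : ℕ → ℝ) (s : ℝ) (i j : ℕ) : ℝ :=
  Real.exp (score t x s i j) / ∑ k ∈ Finset.Icc 1 i, Real.exp (score t x s i k)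

lemma attn_eq_aux (t i : ℕ) (ht : 1 ≤ t) (hti : t < i) (x : ℕ → ℝ) (s : ℝ) :
    attn t x s i t =
      1 / (1 + ∑ k ∈ (Finset.Icc 1 i).erase t, Real.exp (x i * x k + 1 - s)) := by
  have hit : i ≠ t := Nat.ne_of_gt hti
  have htmem : t ∈ Finset.Icc 1 i := Finset.mem_Icc.2 ⟨ht, hti.le⟩
  have hsum : ∑ k ∈ Finset.Icc 1 i, Real.exp (score t x s i k)
      = Real.exp s + ∑ k ∈ (Finset.Icc 1 i).erase t, Real.exp (x i * x k + 1) := by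
    rw [← Finset.add_sum_erase _ _ htmem]
    congr 1
    · simp [score, hit]
    · apply Finset.sum_congr rfl
      intro k hk
      have hk' : k ≠ t := Finset.ne_of_mem_erase hk
      simp [score, hit, hk']
  have hexp : ∀ k : ℕ, Real.exp (x i * x k + 1 - s)
      = Real.exp (x i * x k + 1) * Real.exp (-s) := by
    intro k; rw [← Real.exp_add]; ring_nf
  simp only [hexp, ← Finset.sum_mul]
  set C : ℝ := ∑ k ∈ (Finset.Icc 1 i).erase t, Real.exp (x i * x k + 1) with hC
  have hC0 : 0 ≤ C := Finset.sum_nonneg fun k _ => (Real.exp_pos _).le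
  have hscore : score t x s i t = s := by simp [score, hit]
  rw [attn, hsum, hscore]
  have hd1 : Real.exp s + C > 0 := by positivity
  have hd2 : (1 : ℝ) + C * Real.exp (-s) > 0 := by positivity
  rw [div_eq_div_iff hd1.ne' hd2.ne']
  have : Real.exp s * Real.exp (-s) = 1 := by rw [← Real.exp_add]; simp
  nlinarith [this]

theorem tagged_diff_vanishes (T t : ℕ) (ht : 1 ≤ t) (htT : t < T) (x : ℕ → ℝ) (hxt : x t = 0)
    (j : ℕ) (htj : t < j) (hjT : j ≤ T) :
    (∀ s : ℝ, attn t x s j t =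
      1 / (1 + ∑ k ∈ (Finset.Icc 1 j).erase t, Real.exp (x j * x k + 1 - s))) ∧
    (∀ s : ℝ, attn t x s T t =
      1 / (1 + ∑ k ∈ (Finset.Icc 1 T).erase t, Real.exp (x T * x k + 1 - s))) ∧
    Filter.Tendsto (fun s : ℝ => s * (attn t x s j t - attn t x s T t))
      Filter.atTop (nhds 0) := by
  refine ⟨fun s => attn_eq_aux t j ht htj x s, fun s => attn_eq_aux t T ht htT x s, ?_⟩
  set Cj : ℝ := ∑ k ∈ (Finset.Icc 1 j).erase t, Real.exp (x j * x k + 1) with hCj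
  set CT : ℝ := ∑ k ∈ (Finset.Icc 1 T).erase t, Real.exp (x T * x k + 1) with hCT
  have hCj0 : 0 ≤ Cj := Finset.sum_nonneg fun k _ => (Real.exp_pos _).le
  have hCT0 : 0 ≤ CT := Finset.sum_nonneg fun k _ => (Real.exp_pos _).le
  have hexp : ∀ (y : ℝ) (k : ℕ) (s : ℝ), Real.exp (y * x k + 1 - s)
      = Real.exp (y * x k + 1) * Real.exp (-s) := by
    intro y k s; rw [← Real.exp_add]; ring_nf
  have heq : ∀ s : ℝ, s * (attn t x s j t - attn t x s T t)
      = (CT - Cj) * (s * Real.exp (-s)) *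
        ((1 + Cj * Real.exp (-s))⁻¹ * (1 + CT * Real.exp (-s))⁻¹) := by
    intro s
    rw [attn_eq_aux t j ht htj x s, attn_eq_aux t T ht htT x s]
    simp only [hexp, ← Finset.sum_mul, ← hCj, ← hCT]
    have hd1 : (1 : ℝ) + Cj * Real.exp (-s) > 0 := by positivity
    have hd2 : (1 : ℝ) + CT * Real.exp (-s) > 0 := by positivity
    field_simp
    ring
  rw [show (0 : ℝ) = (CT - Cj) * 0 * ((1 + Cj * (0:ℝ))⁻¹ * (1 + CT * (0:ℝ))⁻¹) by simp]
  refine Tendsto.congr (fun s => (heq s).symm) ?_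
  have h1 : Tendsto (fun s : ℝ => s * Real.exp (-s)) atTop (nhds 0) := by
    have := Real.tendsto_pow_mul_exp_neg_atTop_nhds_zero 1
    simpa using this
  have h2 : Tendsto (fun s : ℝ => Real.exp (-s)) atTop (nhds 0) :=
    Real.tendsto_exp_neg_atTop_nhds_zero
  have h3 : ∀ C : ℝ, 0 ≤ C → Tendsto (fun s : ℝ => (1 + C * Real.exp (-s))⁻¹)
      atTop (nhds ((1 + C * (0:ℝ))⁻¹)) := by
    intro C hC
    exact (((tendsto_const_nhds.mul h2).const_add 1).inv₀ (by simp))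
  exact ((tendsto_const_nhds.mul h1)).mul ((h3 Cj hCj0).mul (h3 CT hCT0))
end

section
/- For every index j with t < j ≤ T, the difference between the attention weights of tokens j and T on the separator vanishes faster than s⁻²: with A_s(j,t) = 1 / (1 + Σ_{k=1, k≠t}^{j} exp(x_j·x_k + 1 − s)) and A_s(T,t) = 1 / (1 + Σ_{k=1, k≠t}^{T} exp(x_T·x_k + 1 − s)), one has s²·(A_s(j,t) − A_s(T,t)) → 0 as s → ∞. -/
open Real Filter Finset Topology

lemma attn_sep_formula (t : ℕ) (x : ℕ → ℝ) (ht : 1 ≤ t) (i : ℕ) (hti : t < i) (s : ℝ) :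
    attn t x s i t =
      1 / (1 + ∑ k ∈ (Finset.Icc 1 i).erase t, Real.exp (x i * x k + 1 - s)) := by
  have hit : i ≠ t := hti.ne'
  have htmem : t ∈ Finset.Icc 1 i := Finset.mem_Icc.mpr ⟨ht, hti.le⟩
  have hscore_it : score t x s i t = s := by simp [score, hit]
  have hsum : ∑ k ∈ Finset.Icc 1 i, Real.exp (score t x s i k)
      = Real.exp s + ∑ k ∈ (Finset.Icc 1 i).erase t, Real.exp (x i * x k + 1) := by
    rw [← Finset.add_sum_erase _ _ htmem, hscore_it]
    congr 1
    refine Finset.sum_congr rfl fun k hk => ?_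
    have hk' : k ≠ t := Finset.ne_of_mem_erase hk
    simp [score, hit, hk']
  have hpos : 0 ≤ ∑ k ∈ (Finset.Icc 1 i).erase t, Real.exp (x i * x k + 1) :=
    Finset.sum_nonneg fun k _ => (Real.exp_pos _).le
  rw [attn, hscore_it, hsum]
  have hes : Real.exp s ≠ 0 := Real.exp_ne_zero s
  have hden : Real.exp s + ∑ k ∈ (Finset.Icc 1 i).erase t, Real.exp (x i * x k + 1) ≠ 0 := by
    positivity
  have hsum2 : ∑ k ∈ (Finset.Icc 1 i).erase t, Real.exp (x i * x k + 1 - s)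
      = (∑ k ∈ (Finset.Icc 1 i).erase t, Real.exp (x i * x k + 1)) / Real.exp s := by
    rw [Finset.sum_div]
    exact Finset.sum_congr rfl fun k _ => by rw [Real.exp_sub]
  rw [hsum2]
  field_simp

lemma key_tendsto (c : ℝ) (hc : 0 ≤ c) :
    Tendsto (fun s : ℝ => s ^ 2 * (1 / (1 + c * Real.exp (-s)) - 1)) atTop (𝓝 0) := by
  have hpos : ∀ s : ℝ, 0 < 1 + c * Real.exp (-s) := fun s => by positivity
  have heq : ∀ s : ℝ, s ^ 2 * (1 / (1 + c * Real.exp (-s)) - 1)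
      = (s ^ 2 * Real.exp (-s)) * (-c / (1 + c * Real.exp (-s))) := by
    intro s
    rw [div_sub_one (hpos s).ne']
    ring
  simp only [heq]
  have h1 : Tendsto (fun s : ℝ => s ^ 2 * Real.exp (-s)) atTop (𝓝 0) :=
    tendsto_pow_mul_exp_neg_atTop_nhds_zero 2
  have h2 : Tendsto (fun s : ℝ => -c / (1 + c * Real.exp (-s))) atTop (𝓝 (-c / (1 + c * 0))) := by
    apply Tendsto.div tendsto_const_nhds
    · exact tendsto_const_nhds.add (tendsto_const_nhds.mul (Real.tendsto_exp_neg_atTop_nhds_zero))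
    · norm_num
  have := h1.mul h2
  simpa using this

theorem tagged_diff_sq_vanishes (T t : ℕ) (ht : 1 ≤ t) (htT : t < T) (x : ℕ → ℝ) (hxt : x t = 0)
    (j : ℕ) (htj : t < j) (hjT : j ≤ T) :
    (∀ s : ℝ, attn t x s j t =
      1 / (1 + ∑ k ∈ (Finset.Icc 1 j).erase t, Real.exp (x j * x k + 1 - s))) ∧
    (∀ s : ℝ, attn t x s T t =
      1 / (1 + ∑ k ∈ (Finset.Icc 1 T).erase t, Real.exp (x T * x k + 1 - s))) ∧
    Filter.Tendsto (fun s : ℝ => s ^ 2 * (attn t x s j t - attn t x s T t))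
      Filter.atTop (nhds 0) := by
  refine ⟨attn_sep_formula t x ht j htj, attn_sep_formula t x ht T htT, ?_⟩
  set cj := ∑ k ∈ (Finset.Icc 1 j).erase t, Real.exp (x j * x k + 1) with hcj
  set cT := ∑ k ∈ (Finset.Icc 1 T).erase t, Real.exp (x T * x k + 1) with hcT
  have hcjn : 0 ≤ cj := Finset.sum_nonneg fun k _ => (Real.exp_pos _).le
  have hcTn : 0 ≤ cT := Finset.sum_nonneg fun k _ => (Real.exp_pos _).le
  have hsumconv : ∀ (i : ℕ), t < i → ∀ s : ℝ,
      ∑ k ∈ (Finset.Icc 1 i).erase t, Real.exp (x i * x k + 1 - s)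
      = (∑ k ∈ (Finset.Icc 1 i).erase t, Real.exp (x i * x k + 1)) * Real.exp (-s) := by
    intro i hi s
    rw [Finset.sum_mul]
    exact Finset.sum_congr rfl fun k _ => by rw [← Real.exp_add]; ring_nf
  have heq : ∀ s : ℝ, s ^ 2 * (attn t x s j t - attn t x s T t)
      = s ^ 2 * (1 / (1 + cj * Real.exp (-s)) - 1)
        - s ^ 2 * (1 / (1 + cT * Real.exp (-s)) - 1) := by
    intro s
    rw [attn_sep_formula t x ht j htj s, attn_sep_formula t x ht T htT s,
      hsumconv j htj s, hsumconv T htT s]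
    ring
  simp only [heq]
  have := (key_tendsto cj hcjn).sub (key_tendsto cT hcTn)
  simpa using this
end

section
/- For every index j with 1 ≤ j < t (non-tagged tokens), the second-layer attention logit diverges to minus infinity: q_s(j) → −∞ as s → ∞. -/
open Real Filter Finset Topology

/-- `g_s(j)`: the factor `h_j - h_T` contributes to the second-layer logit. -/
noncomputable def gfun (T t : ℕ) (x : ℕ → ℝ) (s : ℝ) (j : ℕ) : ℝ :=
  if j < t then -(s - 1) * attn t x s T t
  else if j = t then -(s - 1) * (1 - attn t x s t t + attn t x s T t)
  else (s - 1) * (attn t x s j t - attn t x s T t)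

/-- Second-layer attention logits
`q_s(j) = (b * x_T + d * (s-1) * A_s(T,t)) * g_s(j)`. -/
noncomputable def qfun (T t : ℕ) (x : ℕ → ℝ) (b d : ℝ) (s : ℝ) (j : ℕ) : ℝ :=
  (b * x T + d * (s - 1) * attn t x s T t) * gfun T t x s j

/-- Second-layer attention weights `B_s(j) = exp (q_s(j)) / ∑_{k=1}^{T} exp (q_s(k))`. -/
noncomputable def battn (T t : ℕ) (x : ℕ → ℝ) (b d : ℝ) (s : ℝ) (j : ℕ) : ℝ :=
  Real.exp (qfun T t x b d s j) / ∑ k ∈ Finset.Icc 1 T, Real.exp (qfun T t x b d s k)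

theorem nontagged_logit_diverges (T t : ℕ) (ht : 1 ≤ t) (htT : t < T) (x : ℕ → ℝ) (hxt : x t = 0)
    (b d : ℝ) (hd : 0 < d)
    (j : ℕ) (hj : 1 ≤ j) (hjt : j < t) :
    Filter.Tendsto (fun s : ℝ => qfun T t x b d s j) Filter.atTop Filter.atBot := by
  have hTt : T ≠ t := htT.ne'
  set C : ℝ := ∑ k ∈ (Finset.Icc 1 T).erase t, Real.exp (x T * x k + 1) with hCdef
  have hC0 : 0 ≤ C := Finset.sum_nonneg fun _ _ => (Real.exp_pos _).le
  have hattn : ∀ s : ℝ, attn t x s T t = (1 + C * Real.exp (-s))⁻¹ := by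
    intro s
    have htmem : t ∈ Finset.Icc 1 T := Finset.mem_Icc.mpr ⟨ht, htT.le⟩
    have hden : ∑ k ∈ Finset.Icc 1 T, Real.exp (score t x s T k) = Real.exp s + C := by
      rw [← Finset.add_sum_erase _ _ htmem]
      congr 1
      · simp [score, hTt]
      · apply Finset.sum_congr rfl
        intro k hk
        have hkt : k ≠ t := (Finset.mem_erase.mp hk).1
        simp [score, hTt, hkt]
    have hkey : 1 + C * Real.exp (-s) = (Real.exp s + C) * Real.exp (-s) := by
      rw [add_mul, ← Real.exp_add]
      simp [mul_comm]
    rw [attn, hden, hkey]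
    have hsc : score t x s T t = s := by simp [score, hTt]
    rw [hsc, mul_inv, Real.exp_neg, inv_inv]
    ring
  have hA1 : Filter.Tendsto (fun s : ℝ => attn t x s T t) Filter.atTop (nhds 1) := by
    have h0 : Filter.Tendsto (fun s : ℝ => 1 + C * Real.exp (-s)) Filter.atTop (nhds 1) := by
      have := (Real.tendsto_exp_neg_atTop_nhds_zero).const_mul C
      have := this.const_add 1
      simpa using this
    have := h0.inv₀ (by norm_num)
    simp only [inv_one] at this
    simpa only [hattn] using this
  have hf : Filter.Tendsto (fun s : ℝ => (s - 1) * attn t x s T t) Filter.atTop Filter.atTop :=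
    Filter.Tendsto.atTop_mul_pos zero_lt_one
      (tendsto_atTop_add_const_right _ (-1) tendsto_id) hA1
  have hg : Filter.Tendsto (fun s : ℝ => b * x T + d * ((s - 1) * attn t x s T t))
      Filter.atTop Filter.atTop :=
    tendsto_atTop_add_const_left _ _ (hf.const_mul_atTop hd)
  have hmul := hg.atTop_mul_atTop₀ hf
  have hneg := tendsto_neg_atTop_atBot.comp hmul
  refine hneg.congr fun s => ?_
  simp only [Function.comp, qfun, gfun, if_pos hjt]
  ring
end

section
/- For every index j with 1 ≤ j < t, the second-layer attention logit satisfies the precise asymptotics q_s(j) / s² → −d as s → ∞. -/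
open Real Filter Finset Topology

lemma attn_Tt_eq (T t : ℕ) (ht : 1 ≤ t) (htT : t < T) (x : ℕ → ℝ) (s : ℝ) :
    attn t x s T t = Real.exp s / (Real.exp s +
      ∑ k ∈ (Finset.Icc 1 T).erase t, Real.exp (x T * x k + 1)) := by
  have hTt : T ≠ t := htT.ne'
  have htmem : t ∈ Finset.Icc 1 T := Finset.mem_Icc.2 ⟨ht, htT.le⟩
  unfold attn
  rw [← Finset.add_sum_erase _ _ htmem]
  congr 1
  · unfold score; simp [hTt]
  congr 1
  · unfold score; simp [hTt]
  · apply Finset.sum_congr rfl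
    intro k hk
    have hk' : k ≠ t := (Finset.mem_erase.1 hk).1
    unfold score; simp [hTt, hk']

lemma attn_Tt_tendsto (T t : ℕ) (ht : 1 ≤ t) (htT : t < T) (x : ℕ → ℝ) :
    Filter.Tendsto (fun s : ℝ => attn t x s T t) Filter.atTop (nhds 1) := by
  set C := ∑ k ∈ (Finset.Icc 1 T).erase t, Real.exp (x T * x k + 1) with hC
  have hfun : ∀ s : ℝ, attn t x s T t = 1 / (1 + C * Real.exp (-s)) := by
    intro s
    rw [attn_Tt_eq T t ht htT x s, ← hC]
    rw [Real.exp_neg]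
    have h1 : Real.exp s ≠ 0 := (Real.exp_pos s).ne'
    have hCnn : 0 ≤ C := Finset.sum_nonneg fun k _ => (Real.exp_pos _).le
    have h2 : Real.exp s + C ≠ 0 := by positivity
    field_simp
  simp_rw [hfun]
  have h0 : Filter.Tendsto (fun s : ℝ => C * Real.exp (-s)) Filter.atTop (nhds 0) := by
    have := Real.tendsto_exp_neg_atTop_nhds_zero
    simpa using this.const_mul C
  have h1 : Filter.Tendsto (fun s : ℝ => 1 + C * Real.exp (-s)) Filter.atTop (nhds 1) := by
    simpa using (tendsto_const_nhds (x := (1:ℝ))).add h0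
  have := h1.inv₀ (by norm_num)
  simpa using this

theorem nontagged_logit_asymptotics (T t : ℕ) (ht : 1 ≤ t) (htT : t < T) (x : ℕ → ℝ) (hxt : x t = 0)
    (b d : ℝ) (hd : 0 < d)
    (j : ℕ) (hj : 1 ≤ j) (hjt : j < t) :
    Filter.Tendsto (fun s : ℝ => qfun T t x b d s j / s ^ 2)
      Filter.atTop (nhds (-d)) := by
  have hA := attn_Tt_tendsto T t ht htT x
  set A := fun s : ℝ => attn t x s T t with hAdef
  -- limits of rational pieces
  have hinv : Filter.Tendsto (fun s : ℝ => s⁻¹) Filter.atTop (nhds 0) :=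
    tendsto_inv_atTop_zero
  have hr1 : Filter.Tendsto (fun s : ℝ => (s - 1) / s) Filter.atTop (nhds 1) := by
    have : Filter.Tendsto (fun s : ℝ => 1 - s⁻¹) Filter.atTop (nhds 1) := by
      simpa using (tendsto_const_nhds (x := (1:ℝ))).sub hinv
    apply this.congr'
    filter_upwards [eventually_gt_atTop (0:ℝ)] with s hs
    field_simp
  have hr2 : Filter.Tendsto (fun s : ℝ => (s - 1) / s ^ 2) Filter.atTop (nhds 0) := by
    have : Filter.Tendsto (fun s : ℝ => s⁻¹ - s⁻¹ * s⁻¹) Filter.atTop (nhds 0) := by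
      simpa using hinv.sub (hinv.mul hinv)
    apply this.congr'
    filter_upwards [eventually_gt_atTop (0:ℝ)] with s hs
    have hs2 : s ^ 2 ≠ 0 := by positivity
    rw [eq_div_iff hs2]
    field_simp [hs.ne']
  have hlim : Filter.Tendsto
      (fun s : ℝ => -(b * x T) * ((s - 1) / s ^ 2 * A s) - d * ((s - 1) / s * A s) ^ 2)
      Filter.atTop (nhds (-d)) := by
    have h1 : Filter.Tendsto (fun s : ℝ => -(b * x T) * ((s - 1) / s ^ 2 * A s))
        Filter.atTop (nhds (-(b * x T) * (0 * 1))) :=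
      (tendsto_const_nhds).mul (hr2.mul hA)
    have h2 : Filter.Tendsto (fun s : ℝ => d * ((s - 1) / s * A s) ^ 2)
        Filter.atTop (nhds (d * (1 * 1) ^ 2)) :=
      (tendsto_const_nhds).mul ((hr1.mul hA).pow 2)
    have := h1.sub h2
    simpa using this
  apply hlim.congr'
  filter_upwards [eventually_gt_atTop (0:ℝ)] with s hs
  have hs2 : s ^ 2 ≠ 0 := by positivity
  unfold qfun gfun
  simp only [hjt, if_pos]
  have hAs : attn t x s T t = A s := rfl
  rw [hAs]
  field_simp
  ring
end

section
/- For every index j with t < j ≤ T (tagged tokens), the second-layer attention logit vanishes in the limit: q_s(j) → 0 as s → ∞. -/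
open Real Filter Finset Topology

private lemma attn_tag_eq (t : ℕ) (x : ℕ → ℝ) (ht : 1 ≤ t) {i : ℕ} (hti : t < i) (s : ℝ) :
    attn t x s i t =
      Real.exp s / (Real.exp s + ∑ k ∈ (Finset.Icc 1 i).erase t, Real.exp (x i * x k + 1)) := by
  have hit : i ≠ t := by omega
  have htmem : t ∈ Finset.Icc 1 i := by simp [Finset.mem_Icc]; omega
  have hscore : score t x s i t = s := by simp [score, hit]
  have hsum : ∑ k ∈ Finset.Icc 1 i, Real.exp (score t x s i k)
      = Real.exp s + ∑ k ∈ (Finset.Icc 1 i).erase t, Real.exp (x i * x k + 1) := by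
    rw [← Finset.add_sum_erase _ _ htmem, hscore]
    congr 1
    refine Finset.sum_congr rfl fun k hk => ?_
    have hkt : k ≠ t := Finset.ne_of_mem_erase hk
    simp [score, hit, hkt]
  rw [attn, hscore, hsum]

private lemma csum_pos (t : ℕ) (x : ℕ → ℝ) (ht : 1 ≤ t) {i : ℕ} (hti : t < i) :
    0 < ∑ k ∈ (Finset.Icc 1 i).erase t, Real.exp (x i * x k + 1) := by
  refine Finset.sum_pos (fun k _ => Real.exp_pos _) ?_
  exact ⟨i, Finset.mem_erase.2 ⟨by omega, by simp [Finset.mem_Icc]; omega⟩⟩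

private lemma poly_exp_lim (n : ℕ) :
    Filter.Tendsto (fun s : ℝ => (s - 1) ^ n * Real.exp (-s)) Filter.atTop (nhds 0) := by
  have h1 : Filter.Tendsto (fun s : ℝ => s - 1) Filter.atTop Filter.atTop :=
    Filter.tendsto_atTop_add_const_right _ (-1) Filter.tendsto_id
  have h2 := (tendsto_pow_mul_exp_neg_atTop_nhds_zero n).comp h1
  have h3 : Filter.Tendsto (fun s : ℝ => ((s - 1) ^ n * Real.exp (-(s - 1))) * Real.exp (-1))
      Filter.atTop (nhds 0) := by
    simpa using h2.mul_const (Real.exp (-1))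
  refine h3.congr fun s => ?_
  rw [mul_assoc, ← Real.exp_add]
  ring_nf

theorem tagged_logit_vanishes (T t : ℕ) (ht : 1 ≤ t) (htT : t < T) (x : ℕ → ℝ) (hxt : x t = 0)
    (b d : ℝ) (hd : 0 < d)
    (j : ℕ) (htj : t < j) (hjT : j ≤ T) :
    Filter.Tendsto (fun s : ℝ => qfun T t x b d s j) Filter.atTop (nhds 0) := by
  have hTt : t < T := htT
  obtain ⟨cj, hcj⟩ : ∃ c : ℝ, c = ∑ k ∈ (Finset.Icc 1 j).erase t, Real.exp (x j * x k + 1) :=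
    ⟨_, rfl⟩
  obtain ⟨cT, hcT⟩ : ∃ c : ℝ, c = ∑ k ∈ (Finset.Icc 1 T).erase t, Real.exp (x T * x k + 1) :=
    ⟨_, rfl⟩
  have hcjpos : 0 < cj := hcj ▸ csum_pos t x ht htj
  have hcTpos : 0 < cT := hcT ▸ csum_pos t x ht htT
  have hq : ∀ s : ℝ, qfun T t x b d s j =
      (b * x T + d * (s - 1) * (Real.exp s / (Real.exp s + cT))) *
        ((s - 1) * (Real.exp s / (Real.exp s + cj) - Real.exp s / (Real.exp s + cT))) := by
    intro s
    have h1 : ¬ j < t := by omega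
    have h2 : j ≠ t := by omega
    rw [qfun, gfun, if_neg h1, if_neg h2, attn_tag_eq t x ht htj s, attn_tag_eq t x ht htT s,
      ← hcj, ← hcT]
  refine squeeze_zero_norm'
      (a := fun s : ℝ => (|b * x T| + d * (s - 1)) *
        ((s - 1) * ((cj + cT) * Real.exp (-s)))) ?_ ?_
  · filter_upwards [Filter.eventually_ge_atTop (1 : ℝ)] with s hs
    have hE : (0:ℝ) < Real.exp s := Real.exp_pos s
    have hEj : (0:ℝ) < Real.exp s + cj := by linarith
    have hET : (0:ℝ) < Real.exp s + cT := by linarith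
    have hs1 : (0:ℝ) ≤ s - 1 := by linarith
    rw [hq s, Real.norm_eq_abs, abs_mul]
    have hB1 : Real.exp s / (Real.exp s + cT) ≤ 1 := by
      rw [div_le_one hET]; linarith
    have hB0 : 0 ≤ Real.exp s / (Real.exp s + cT) := by positivity
    have hP : |b * x T + d * (s - 1) * (Real.exp s / (Real.exp s + cT))|
        ≤ |b * x T| + d * (s - 1) := by
      refine (abs_add_le _ _).trans ?_
      have : |d * (s - 1) * (Real.exp s / (Real.exp s + cT))| ≤ d * (s - 1) := by
        rw [abs_of_nonneg (by positivity)]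
        calc d * (s - 1) * (Real.exp s / (Real.exp s + cT)) ≤ d * (s - 1) * 1 := by
              gcongr
          _ = d * (s - 1) := by ring
      linarith
    have hdiff : Real.exp s / (Real.exp s + cj) - Real.exp s / (Real.exp s + cT)
        = Real.exp s * (cT - cj) / ((Real.exp s + cj) * (Real.exp s + cT)) := by
      field_simp; ring
    have hG : |(s - 1) * (Real.exp s / (Real.exp s + cj) - Real.exp s / (Real.exp s + cT))|
        ≤ (s - 1) * ((cj + cT) * Real.exp (-s)) := by
      rw [abs_mul, abs_of_nonneg hs1, hdiff]
      have habs : |Real.exp s * (cT - cj) / ((Real.exp s + cj) * (Real.exp s + cT))|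
          ≤ (cj + cT) * Real.exp (-s) := by
        rw [abs_div, abs_of_nonneg (by positivity : (0:ℝ) ≤ (Real.exp s + cj) * (Real.exp s + cT)),
          abs_mul, abs_of_nonneg hE.le]
        rw [div_le_iff₀ (by positivity)]
        have h1 : |cT - cj| ≤ cj + cT := by
          rw [abs_le]; constructor <;> linarith
        have h2 : Real.exp s * Real.exp s ≤ (Real.exp s + cj) * (Real.exp s + cT) := by
          nlinarith
        calc Real.exp s * |cT - cj| ≤ Real.exp s * (cj + cT) := by gcongr
          _ = (cj + cT) * Real.exp (-s) * (Real.exp s * Real.exp s) := by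
              have hinv : Real.exp (-s) * Real.exp s = 1 := by
                rw [← Real.exp_add]; simp
              linear_combination (-(cj + cT) * Real.exp s) * hinv
          _ ≤ (cj + cT) * Real.exp (-s) * ((Real.exp s + cj) * (Real.exp s + cT)) := by
              gcongr
      exact mul_le_mul_of_nonneg_left habs hs1
    exact mul_le_mul hP hG (abs_nonneg _) (by positivity)
  · have h1 := (poly_exp_lim 1).const_mul (|b * x T| * (cj + cT))
    have h2 := (poly_exp_lim 2).const_mul (d * (cj + cT))
    have h3 := h1.add h2
    simp only [mul_zero, add_zero] at h3
    refine h3.congr fun s => ?_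
    ring
end

section
/- For every index j with 1 ≤ j ≤ t, the second-layer attention weight of the last token on token j vanishes in the limit: B_s(j) = exp(q_s(j)) / Σ_{k=1}^{T} exp(q_s(k)) → 0 as s → ∞. -/
open Real Filter Finset Topology

lemma score_sum_pos (t : ℕ) (x : ℕ → ℝ) (s : ℝ) (i : ℕ) (h : 1 ≤ i) :
    0 < ∑ k ∈ Finset.Icc 1 i, Real.exp (score t x s i k) :=
  Finset.sum_pos (fun k _ => Real.exp_pos _) (Finset.nonempty_Icc.mpr h)

lemma attn_le_one (t : ℕ) (x : ℕ → ℝ) (s : ℝ) (i j : ℕ) (h1 : 1 ≤ j) (h2 : j ≤ i) :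
    attn t x s i j ≤ 1 := by
  rw [attn, div_le_one (score_sum_pos t x s i (h1.trans h2))]
  exact Finset.single_le_sum (fun k _ => (Real.exp_pos _).le)
    (Finset.mem_Icc.mpr ⟨h1, h2⟩)

theorem second_layer_weight_vanishes (T t : ℕ) (ht : 1 ≤ t) (htT : t < T) (x : ℕ → ℝ) (hxt : x t = 0)
    (b d : ℝ) (hd : 0 < d)
    (j : ℕ) (hj : 1 ≤ j) (hjt : j ≤ t) :
    Filter.Tendsto (fun s : ℝ => battn T t x b d s j) Filter.atTop (nhds 0) := by
  have htT' : t ≤ T := le_of_lt htT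
  have hTne : T ≠ t := Nat.ne_of_gt htT
  have h1T : 1 ≤ T := ht.trans htT'
  have htmem : t ∈ Finset.Icc 1 T := Finset.mem_Icc.mpr ⟨ht, htT'⟩
  set C : ℝ := ∑ k ∈ (Finset.Icc 1 T).erase t, Real.exp (x T * x k + 1) with hC
  have hCnn : 0 ≤ C := Finset.sum_nonneg fun k _ => (Real.exp_pos _).le
  -- closed form of A_s(T,t)
  have hden : ∀ s : ℝ,
      ∑ k ∈ Finset.Icc 1 T, Real.exp (score t x s T k) = Real.exp s + C := by
    intro s
    rw [← Finset.add_sum_erase _ _ htmem, hC]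
    congr 1
    · simp [score, hTne]
    · refine Finset.sum_congr rfl fun k hk => ?_
      have hk' : k ≠ t := (Finset.mem_erase.mp hk).1
      simp [score, hTne, hk']
  have hA : ∀ s : ℝ, attn t x s T t = Real.exp s / (Real.exp s + C) := by
    intro s
    rw [attn, hden s]
    congr 1
    simp [score, hTne]
  -- eventually A_s(T,t) ≥ 1/2
  have hAhalf : ∀ᶠ s : ℝ in atTop, (1 : ℝ) / 2 ≤ attn t x s T t := by
    filter_upwards [Real.tendsto_exp_atTop.eventually_ge_atTop C] with s hs
    rw [hA, le_div_iff₀ (by positivity)]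
    linarith
  -- eventually the factor F is large
  have hF : ∀ᶠ s : ℝ in atTop,
      d * (s - 1) / 4 ≤ b * x T + d * (s - 1) * attn t x s T t ∧ 1 ≤ s := by
    filter_upwards [hAhalf, eventually_ge_atTop (1 + 4 * (1 + |b * x T|) / d)]
      with s h1 h2
    have hpos : 0 < 4 * (1 + |b * x T|) / d := by positivity
    have hs1 : 1 ≤ s := by linarith
    have hds : 4 * (1 + |b * x T|) ≤ d * (s - 1) := by
      have h' : 4 * (1 + |b * x T|) / d ≤ s - 1 := by linarith
      calc 4 * (1 + |b * x T|) = 4 * (1 + |b * x T|) / d * d := by field_simp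
        _ ≤ (s - 1) * d := mul_le_mul_of_nonneg_right h' hd.le
        _ = d * (s - 1) := mul_comm _ _
    have hmul : d * (s - 1) * (1 / 2) ≤ d * (s - 1) * attn t x s T t :=
      mul_le_mul_of_nonneg_left h1 (by nlinarith)
    have habs : -(|b * x T|) ≤ b * x T := neg_abs_le _
    constructor
    · linarith
    · exact hs1
  -- key inequality on q
  have main : ∀ s : ℝ, 1 ≤ s →
      d * (s - 1) / 4 ≤ b * x T + d * (s - 1) * attn t x s T t →
      ∀ G : ℝ, (1 : ℝ) / 2 ≤ G →
      (b * x T + d * (s - 1) * attn t x s T t) * (-(s - 1) * G) ≤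
        -(d * (s - 1) ^ 2) / 8 := by
    intro s hs1 hFlow G hG
    set F := b * x T + d * (s - 1) * attn t x s T t with hFdef
    have h0s : (0 : ℝ) ≤ s - 1 := by linarith
    have h0F : 0 ≤ F := le_trans (by positivity) hFlow
    have h3 : (s - 1) * (1 / 2) ≤ (s - 1) * G := mul_le_mul_of_nonneg_left hG h0s
    have h4 : F * ((s - 1) * (1 / 2)) ≤ F * ((s - 1) * G) :=
      mul_le_mul_of_nonneg_left h3 h0F
    have h5 : d * (s - 1) / 4 * ((s - 1) * (1 / 2)) ≤ F * ((s - 1) * (1 / 2)) :=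
      mul_le_mul_of_nonneg_right hFlow (by positivity)
    nlinarith [h4, h5]
  -- q_s(j) → -∞
  have hq : ∀ᶠ s : ℝ in atTop,
      qfun T t x b d s j ≤ -(d * (s - 1) ^ 2) / 8 := by
    rcases lt_or_eq_of_le hjt with hlt | heq
    · filter_upwards [hF, hAhalf] with s ⟨hFlow, hs1⟩ hG
      have : gfun T t x s j = -(s - 1) * attn t x s T t := by
        rw [gfun, if_pos hlt]
      rw [qfun, this]
      exact main s hs1 hFlow _ hG
    · subst heq
      filter_upwards [hF, hAhalf] with s ⟨hFlow, hs1⟩ hG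
      have hAt1 : attn j x s j j ≤ 1 := attn_le_one j x s j j hj le_rfl
      have : gfun T j x s j = -(s - 1) * (1 - attn j x s j j + attn j x s T j) := by
        rw [gfun, if_neg (lt_irrefl j), if_pos rfl]
      rw [qfun, this]
      exact main s hs1 hFlow _ (by linarith)
  have hqbot : Tendsto (fun s : ℝ => qfun T t x b d s j) atTop atBot := by
    apply tendsto_atBot_mono' atTop hq
    have h1 : Tendsto (fun s : ℝ => (s - 1) ^ 2) atTop atTop :=
      (tendsto_pow_atTop two_ne_zero).comp (tendsto_atTop_add_const_right _ (-1) tendsto_id)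
    have h2 : Tendsto (fun s : ℝ => d / 8 * (s - 1) ^ 2) atTop atTop :=
      h1.const_mul_atTop (by positivity)
    have h3 : Tendsto (fun s : ℝ => -(d / 8 * (s - 1) ^ 2)) atTop atBot :=
      tendsto_neg_atBot_iff.mpr h2
    convert h3 using 2 with s
    ring
  have hexp : Tendsto (fun s : ℝ => Real.exp (qfun T t x b d s j)) atTop (nhds 0) :=
    Real.tendsto_exp_atBot.comp hqbot
  -- q_s(T) = 0, so the denominator is at least 1
  have hD1 : ∀ s : ℝ, 1 ≤ ∑ k ∈ Finset.Icc 1 T, Real.exp (qfun T t x b d s k) := by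
    intro s
    have hqT : qfun T t x b d s T = 0 := by
      rw [qfun, gfun, if_neg (by omega), if_neg hTne]
      ring
    calc (1 : ℝ) = Real.exp (qfun T t x b d s T) := by rw [hqT, Real.exp_zero]
      _ ≤ _ := Finset.single_le_sum (fun k _ => (Real.exp_pos _).le)
          (Finset.mem_Icc.mpr ⟨h1T, le_rfl⟩)
  -- squeeze
  refine squeeze_zero (fun s => ?_) (fun s => ?_) hexp
  · exact div_nonneg (Real.exp_pos _).le (by linarith [hD1 s])
  · exact div_le_self (Real.exp_pos _).le (hD1 s)
end

section
/- (Main theorem, `catch, tag, release'.) The output of the two-layer transformer converges to the average of the numbers after the separator: f(s) := Σ_{j=1}^{T} B_s(j)·x_j → (1/(T − t)) · Σ_{i=t+1}^{T} x_i as s → ∞ (recall x_t = 0, so the separator contributes nothing). Here f(s) equals f_θ(x) for the two-layer attention-only transformer of the paper's Theorem 1 with parameters s_num = 0, W_V¹ = [[0,0],[0,−1]], W_Q²W_K² = [[0,b],[0,d]] with d > 0, and W_V² = (1,0)^⊤. -/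
open Real Filter Finset Topology

/-- The constant part of the softmax denominator at a row `i ≠ t`. -/
noncomputable def Cc (t : ℕ) (x : ℕ → ℝ) (i : ℕ) : ℝ :=
  ∑ k ∈ (Finset.Icc 1 i).erase t, Real.exp (x i * x k + 1)

lemma Cc_nonneg (t : ℕ) (x : ℕ → ℝ) (i : ℕ) : 0 ≤ Cc t x i :=
  Finset.sum_nonneg fun _ _ => (Real.exp_pos _).le

lemma denom_eq (t : ℕ) (x : ℕ → ℝ) (s : ℝ) (i : ℕ) (ht : 1 ≤ t) (hti : t ≤ i) (hi : i ≠ t) :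
    ∑ k ∈ Finset.Icc 1 i, Real.exp (score t x s i k) = Real.exp s + Cc t x i := by
  have htmem : t ∈ Finset.Icc 1 i := Finset.mem_Icc.2 ⟨ht, hti⟩
  rw [← Finset.add_sum_erase _ _ htmem]
  congr 1
  · simp [score, hi]
  · unfold Cc
    refine Finset.sum_congr rfl fun k hk => ?_
    have hk' : k ≠ t := (Finset.mem_erase.1 hk).1
    simp [score, hi, hk']

lemma one_add_pos (t : ℕ) (x : ℕ → ℝ) (i : ℕ) (s : ℝ) :
    0 < 1 + Cc t x i * Real.exp (-s) := by
  have := Cc_nonneg t x i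
  positivity

lemma attn_sep (t : ℕ) (x : ℕ → ℝ) (s : ℝ) (i : ℕ) (ht : 1 ≤ t) (hti : t < i) :
    attn t x s i t = 1 / (1 + Cc t x i * Real.exp (-s)) := by
  unfold attn
  rw [denom_eq t x s i ht hti.le hti.ne']
  have hsc : score t x s i t = s := by simp [score, hti.ne']
  rw [hsc]
  have h1 : (0:ℝ) < Real.exp s + Cc t x i :=
    add_pos_of_pos_of_nonneg (Real.exp_pos s) (Cc_nonneg t x i)
  have h2 := one_add_pos t x i s
  rw [div_eq_div_iff h1.ne' h2.ne', Real.exp_neg]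
  have he := (Real.exp_pos s).ne'
  field_simp

lemma attn_tt (t : ℕ) (x : ℕ → ℝ) (s : ℝ) (ht : 1 ≤ t) :
    attn t x s t t
      = Real.exp (s ^ 2) / (Real.exp (s ^ 2) + ((t : ℝ) - 1) * Real.exp s) := by
  unfold attn
  have htmem : t ∈ Finset.Icc 1 t := Finset.mem_Icc.2 ⟨ht, le_rfl⟩
  have hden : ∑ k ∈ Finset.Icc 1 t, Real.exp (score t x s t k)
      = Real.exp (s ^ 2) + ((t : ℝ) - 1) * Real.exp s := by
    rw [← Finset.add_sum_erase _ _ htmem]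
    congr 1
    · simp [score]
    · have : ∀ k ∈ (Finset.Icc 1 t).erase t, Real.exp (score t x s t k) = Real.exp s := by
        intro k hk
        have hk' : k ≠ t := (Finset.mem_erase.1 hk).1
        simp [score, hk']
      rw [Finset.sum_congr rfl this, Finset.sum_const, nsmul_eq_mul]
      congr 1
      rw [Finset.card_erase_of_mem htmem, Nat.card_Icc]
      have h2 : t + 1 - 1 - 1 = t - 1 := by omega
      rw [h2, Nat.cast_sub ht, Nat.cast_one]
  rw [hden]
  congr 1
  simp [score]

lemma sep_tendsto_one (t : ℕ) (x : ℕ → ℝ) (i : ℕ) (ht : 1 ≤ t) (hti : t < i) :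
    Tendsto (fun s : ℝ => attn t x s i t) atTop (nhds 1) := by
  have h1 : Tendsto (fun s : ℝ => 1 + Cc t x i * Real.exp (-s)) atTop (nhds 1) := by
    have := Real.tendsto_exp_neg_atTop_nhds_zero.const_mul (Cc t x i)
    simpa using (tendsto_const_nhds (x := (1:ℝ))).add this
  have := (tendsto_const_nhds (x := (1:ℝ))).div h1 one_ne_zero
  simp only [div_one] at this
  exact this.congr fun s => (attn_sep t x s i ht hti).symm

lemma poly_exp_tendsto (n : ℕ) :
    Tendsto (fun s : ℝ => (s - 1) ^ n * Real.exp (-s)) atTop (nhds 0) := by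
  have h1 : Tendsto (fun s : ℝ => s - 1) atTop atTop :=
    tendsto_atTop_add_const_right atTop (-1) tendsto_id
  have h2 := (Real.tendsto_pow_mul_exp_neg_atTop_nhds_zero n).comp h1
  have h3 := h2.mul_const (Real.exp (-1))
  rw [zero_mul] at h3
  refine h3.congr fun s => ?_
  simp only [Function.comp]
  rw [mul_assoc, ← Real.exp_add]
  ring_nf

lemma one_sub_attn_tt_tendsto (t : ℕ) (x : ℕ → ℝ) (ht : 1 ≤ t) (n : ℕ) :
    Tendsto (fun s : ℝ => (s - 1) ^ n * (1 - attn t x s t t)) atTop (nhds 0) := by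
  have ht1 : (0:ℝ) ≤ (t:ℝ) - 1 := by
    have : (1:ℝ) ≤ t := by exact_mod_cast ht
    linarith
  have hg : Tendsto (fun s : ℝ => ((t:ℝ) - 1) * ((s - 1) ^ n * Real.exp (-s)))
      atTop (nhds 0) := by
    simpa using (poly_exp_tendsto n).const_mul ((t:ℝ) - 1)
  refine squeeze_zero' ?_ ?_ hg
  · filter_upwards [eventually_ge_atTop (2:ℝ)] with s hs
    have hD : (0:ℝ) < Real.exp (s^2) + ((t:ℝ)-1) * Real.exp s := by positivity
    have h1 : attn t x s t t ≤ 1 := by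
      rw [attn_tt t x s ht, div_le_one hD]
      nlinarith [Real.exp_pos s]
    have h2 : (0:ℝ) ≤ (s-1)^n := by
      apply pow_nonneg; linarith
    have : 0 ≤ 1 - attn t x s t t := by linarith
    positivity
  · filter_upwards [eventually_ge_atTop (2:ℝ)] with s hs
    have hD : (0:ℝ) < Real.exp (s^2) + ((t:ℝ)-1) * Real.exp s := by positivity
    have h2 : (0:ℝ) ≤ (s-1)^n := by
      apply pow_nonneg; linarith
    have hmono : Real.exp s ≤ Real.exp (-s) * Real.exp (s^2) := by
      rw [← Real.exp_add]
      apply Real.exp_le_exp.2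
      nlinarith
    have key : 1 - attn t x s t t ≤ ((t:ℝ)-1) * Real.exp (-s) := by
      rw [attn_tt t x s ht]
      have heq : 1 - Real.exp (s^2) / (Real.exp (s^2) + ((t:ℝ)-1) * Real.exp s)
          = (((t:ℝ)-1) * Real.exp s) / (Real.exp (s^2) + ((t:ℝ)-1) * Real.exp s) := by
        field_simp
        ring
      rw [heq, div_le_iff₀ hD]
      nlinarith [Real.exp_pos s, Real.exp_pos (-s), mul_nonneg ht1 (Real.exp_pos s).le,
        mul_nonneg (mul_nonneg ht1 ht1) (mul_nonneg (Real.exp_pos (-s)).le (Real.exp_pos s).le)]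
    calc (s-1)^n * (1 - attn t x s t t) ≤ (s-1)^n * (((t:ℝ)-1) * Real.exp (-s)) :=
          mul_le_mul_of_nonneg_left key h2
      _ = ((t:ℝ)-1) * ((s-1)^n * Real.exp (-s)) := by ring

theorem catch_tag_release (T t : ℕ) (ht : 1 ≤ t) (htT : t < T) (x : ℕ → ℝ) (hxt : x t = 0)
    (b d : ℝ) (hd : 0 < d) :
    Filter.Tendsto
      (fun s : ℝ => ∑ j ∈ Finset.Icc 1 T, battn T t x b d s j * x j)
      Filter.atTop
      (nhds ((1 / ((T : ℝ) - (t : ℝ))) * ∑ i ∈ Finset.Icc (t + 1) T, x i)) := by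
  have hAT : Tendsto (fun s : ℝ => attn t x s T t) atTop (nhds 1) :=
    sep_tendsto_one t x T ht htT
  have hs1 : Tendsto (fun s : ℝ => s - 1) atTop atTop :=
    tendsto_atTop_add_const_right atTop (-1) tendsto_id
  have hSA : Tendsto (fun s : ℝ => (s - 1) * attn t x s T t) atTop atTop :=
    hs1.atTop_mul_pos one_pos hAT
  have hM : Tendsto (fun s : ℝ => b * x T + d * (s - 1) * attn t x s T t) atTop atTop := by
    have h1 := hSA.const_mul_atTop hd
    have h2 : Tendsto (fun s : ℝ => b * x T + d * ((s - 1) * attn t x s T t)) atTop atTop :=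
      tendsto_atTop_add_const_left atTop _ h1
    exact h2.congr fun s => by ring
  have hMSA : Tendsto
      (fun s : ℝ => (s - 1) * attn t x s T t *
        (b * x T + d * (s - 1) * attn t x s T t)) atTop atTop :=
    hSA.atTop_mul_atTop₀ hM
  -- per-coordinate limits of exp (qfun)
  have hq : ∀ j ∈ Finset.Icc 1 T, Tendsto (fun s : ℝ => Real.exp (qfun T t x b d s j))
      atTop (nhds (if t < j then 1 else 0)) := by
    intro j hj
    rcases lt_trichotomy j t with hjt | hjt | hjt
    · rw [if_neg (by omega)]
      have heq : ∀ s : ℝ, qfun T t x b d s j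
          = -((s - 1) * attn t x s T t * (b * x T + d * (s - 1) * attn t x s T t)) := by
        intro s
        simp only [qfun, gfun, if_pos hjt]
        ring
      have hq1 : Tendsto (fun s : ℝ => qfun T t x b d s j) atTop atBot := by
        refine Tendsto.congr (fun s => (heq s).symm) ?_
        exact tendsto_neg_atTop_atBot.comp hMSA
      exact Real.tendsto_exp_atBot.comp hq1
    · rw [if_neg (by omega)]
      have heq : ∀ s : ℝ, qfun T t x b d s j
          = -(b * x T * ((s - 1) ^ 1 * (1 - attn t x s t t))
              + d * attn t x s T t * ((s - 1) ^ 2 * (1 - attn t x s t t)))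
            + -((s - 1) * attn t x s T t *
                (b * x T + d * (s - 1) * attn t x s T t)) := by
        intro s
        simp only [qfun, gfun, hjt, lt_irrefl, if_false, if_true]
        ring
      have h0 : Tendsto (fun s : ℝ =>
          -(b * x T * ((s - 1) ^ 1 * (1 - attn t x s t t))
            + d * attn t x s T t * ((s - 1) ^ 2 * (1 - attn t x s t t))))
          atTop (nhds 0) := by
        have ha := (one_sub_attn_tt_tendsto t x ht 1).const_mul (b * x T)
        have hb := ((hAT.const_mul d).mul (one_sub_attn_tt_tendsto t x ht 2))
        simpa using (ha.add hb).neg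
      have hq1 : Tendsto (fun s : ℝ => qfun T t x b d s j) atTop atBot := by
        refine Tendsto.congr (fun s => (heq s).symm) ?_
        exact h0.add_atBot (tendsto_neg_atTop_atBot.comp hMSA)
      exact Real.tendsto_exp_atBot.comp hq1
    · rw [if_pos hjt]
      have hAj : Tendsto (fun s : ℝ => attn t x s j t) atTop (nhds 1) :=
        sep_tendsto_one t x j ht hjt
      have heq : ∀ s : ℝ, qfun T t x b d s j
          = (Cc t x T - Cc t x j) *
              (b * x T * ((s - 1) ^ 1 * Real.exp (-s))
                + d * ((s - 1) ^ 2 * Real.exp (-s)) * attn t x s T t) *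
              (attn t x s j t * attn t x s T t) := by
        intro s
        simp only [qfun, gfun, if_neg (by omega : ¬ j < t), if_neg (by omega : ¬ j = t)]
        rw [attn_sep t x s j ht hjt, attn_sep t x s T ht htT]
        have h1 := (one_add_pos t x j s).ne'
        have h2 := (one_add_pos t x T s).ne'
        have h1' : 1 + Real.exp (-s) * Cc t x j ≠ 0 := by rw [mul_comm]; exact h1
        have h2' : 1 + Real.exp (-s) * Cc t x T ≠ 0 := by rw [mul_comm]; exact h2
        field_simp
        ring
      have h0 : Tendsto (fun s : ℝ =>
          (Cc t x T - Cc t x j) *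
            (b * x T * ((s - 1) ^ 1 * Real.exp (-s))
              + d * ((s - 1) ^ 2 * Real.exp (-s)) * attn t x s T t) *
            (attn t x s j t * attn t x s T t)) atTop (nhds 0) := by
        have ha := (poly_exp_tendsto 1).const_mul (b * x T)
        have hb := ((poly_exp_tendsto 2).const_mul d).mul hAT
        have hc := ((ha.add hb).const_mul (Cc t x T - Cc t x j)).mul (hAj.mul hAT)
        simpa using hc
      have := (Real.continuous_exp.tendsto 0).comp
        (h0.congr fun s => (heq s).symm)
      simpa [Function.comp_def] using this
  -- value of the limiting denominator
  have hTt : (0:ℝ) < (T:ℝ) - (t:ℝ) := by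
    have : (t:ℝ) < T := by exact_mod_cast htT
    linarith
  have hfil : (Finset.Icc 1 T).filter (fun k => t < k) = Finset.Icc (t + 1) T := by
    ext k
    simp only [Finset.mem_filter, Finset.mem_Icc]
    omega
  have hsum_val : (∑ k ∈ Finset.Icc 1 T, (if t < k then (1:ℝ) else 0)) = (T:ℝ) - (t:ℝ) := by
    rw [← Finset.sum_filter, hfil, Finset.sum_const, nsmul_eq_mul, mul_one, Nat.card_Icc]
    have h2 : T + 1 - (t + 1) = T - t := by omega
    rw [h2, Nat.cast_sub htT.le]
  have hden : Tendsto (fun s : ℝ => ∑ k ∈ Finset.Icc 1 T, Real.exp (qfun T t x b d s k))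
      atTop (nhds ((T:ℝ) - (t:ℝ))) := by
    rw [← hsum_val]
    exact tendsto_finset_sum _ hq
  have hfin : Tendsto (fun s : ℝ => ∑ j ∈ Finset.Icc 1 T, battn T t x b d s j * x j)
      atTop (nhds (∑ j ∈ Finset.Icc 1 T, (if t < j then (1:ℝ) else 0) / ((T:ℝ) - (t:ℝ)) * x j)) := by
    refine tendsto_finset_sum _ fun j hj => ?_
    have := ((hq j hj).div hden hTt.ne').mul_const (x j)
    simpa only [battn, Pi.div_apply] using this
  have hval : (∑ j ∈ Finset.Icc 1 T, (if t < j then (1:ℝ) else 0) / ((T:ℝ) - (t:ℝ)) * x j)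
      = (1 / ((T : ℝ) - (t : ℝ))) * ∑ i ∈ Finset.Icc (t + 1) T, x i := by
    have h1 : ∀ j, (if t < j then (1:ℝ) else 0) / ((T:ℝ) - (t:ℝ)) * x j
        = if t < j then 1 / ((T:ℝ) - (t:ℝ)) * x j else 0 := by
      intro j; split <;> simp
    simp_rw [h1]
    rw [← Finset.sum_filter, hfil, Finset.mul_sum]
  rw [hval] at hfin
  exact hfin
end
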